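/- In the independent random 2-SAT model with parameters α, p₀, p₁, p₂, let Z_t⁺ (resp. Z_t⁻) be the expected number of directed paths of length t in the implication digraph starting from a fixed positive (resp. negative) literal and visiting literals with pairwise distinct variables. Then for every t ≥ 0, the vector (Z_t⁺, Z_t⁻) is componentwise at most M(α)^t · (1, 1)ᵀ, where M(α) is the 2×2 matrix α · [[p₁, 2p₀], [2p₂, p₁]]. -/

import Mathlib

open MeasureTheory ENNReal Matrix

/-- The Bernoulli probability measure on `Bool` with success parameter `p` (clamped
to `[0,1]`; under the hypotheses of the theorem below the clamp is inactive). -/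
noncomputable def bern (p : ℝ≥0∞) : Measure Bool :=
  (PMF.bernoulli (min p 1).toNNReal
    (by simpa using (ENNReal.toNNReal_le_toNNReal (by simp) (by simp)).2 (min_le_right p 1))).toMeasure

instance (p : ℝ≥0∞) : IsProbabilityMeasure (bern p) := by
  unfold bern; infer_instance

/-- Index of the potential 2-clauses on `n` variables: `(0, i, j)` with `i < j` indexes
the clause `x_i ∨ x_j`, `(1, i, j)` with `i < j` indexes `¬x_i ∨ ¬x_j`, and `(2, i, j)`
with `i ≠ j` indexes `x_i ∨ ¬x_j`. -/
abbrev ClauseIdx (n : ℕ) := Fin 3 × Fin n × Fin n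

/-- Inclusion probability of each potential clause in the independent random 2-SAT
model: `2αp₂/n` for `x_i ∨ x_j`, `2αp₀/n` for `¬x_i ∨ ¬x_j`, `αp₁/n` for `x_i ∨ ¬x_j`. -/
noncomputable def clauseProb (α p₀ p₁ p₂ : ℝ) (n : ℕ) : ClauseIdx n → ℝ≥0∞ := fun x =>
  if x.1 = 0 then (if x.2.1 < x.2.2 then ENNReal.ofReal (2 * α * p₂ / n) else 0)
  else if x.1 = 1 then (if x.2.1 < x.2.2 then ENNReal.ofReal (2 * α * p₀ / n) else 0)
  else (if x.2.1 ≠ x.2.2 then ENNReal.ofReal (α * p₁ / n) else 0)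

/-- The independent random 2-SAT model: every potential clause is included
independently with its prescribed probability. -/
noncomputable def F2Measure (α p₀ p₁ p₂ : ℝ) (n : ℕ) : Measure (ClauseIdx n → Bool) :=
  Measure.pi fun i => bern (clauseProb α p₀ p₁ p₂ n i)

/-- Presence of the positive clause `x_a ∨ x_b` in the sampled formula. -/
def PosClause (n : ℕ) (ω : ClauseIdx n → Bool) (a b : Fin n) : Prop :=
  (a < b ∧ ω (0, a, b) = true) ∨ (b < a ∧ ω (0, b, a) = true)

/-- Presence of the negative clause `¬x_a ∨ ¬x_b` in the sampled formula. -/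
def NegClause (n : ℕ) (ω : ClauseIdx n → Bool) (a b : Fin n) : Prop :=
  (a < b ∧ ω (1, a, b) = true) ∨ (b < a ∧ ω (1, b, a) = true)

/-- Presence of the mixed clause `x_a ∨ ¬x_b` in the sampled formula. -/
def MixClause (n : ℕ) (ω : ClauseIdx n → Bool) (a b : Fin n) : Prop :=
  a ≠ b ∧ ω (2, a, b) = true

/-- The edge relation of the implication digraph of the sampled formula, on literals
`(a, s) : Fin n × Bool` (`(a, true)` is `x_a`, `(a, false)` is `¬x_a`): each included
clause `ℓ₁ ∨ ℓ₂` contributes the edges `¬ℓ₁ → ℓ₂` and `¬ℓ₂ → ℓ₁`. -/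
def ImpEdge (n : ℕ) (ω : ClauseIdx n → Bool) (u v : Fin n × Bool) : Prop :=
  (u.2 = false ∧ v.2 = true ∧ PosClause n ω u.1 v.1) ∨
  (u.2 = true ∧ v.2 = false ∧ NegClause n ω u.1 v.1) ∨
  (u.2 = true ∧ v.2 = true ∧ MixClause n ω v.1 u.1) ∨
  (u.2 = false ∧ v.2 = false ∧ MixClause n ω u.1 v.1)

/-- The number of directed paths of length `t` in the implication digraph of the sampled
formula that start at the literal `start` and visit literals with pairwise distinct
variables. -/
noncomputable def pathCount (n : ℕ) (ω : ClauseIdx n → Bool) (start : Fin n × Bool)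
    (t : ℕ) : ℕ :=
  Nat.card {L : Fin (t + 1) → Fin n × Bool //
    L 0 = start ∧
    (∀ s : Fin t, ImpEdge n ω (L s.castSucc) (L s.succ)) ∧
    (∀ i j : Fin (t + 1), i ≠ j → (L i).1 ≠ (L j).1)}

/-!
Linearity of expectation reduces the expected path count to a sum, over sequences of literals
with pairwise distinct variables, of the probability that all edges of the sequence are present.
Each edge `u → v` is present iff one specific clause is included, and along a sequence with
distinct variables these clauses are distinct, so by independence that probability is at most
the product of the weights `M(σ u, σ v) / n` (`σ` the sign of a literal). Dropping the
distinctness constraint, the sum of these products over all sequences from `start` is the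
`start` entry of `A ^ t *ᵥ 1` for the literal matrix `A u v = M(σ u, σ v) / n`, and since
every sign class has exactly `n` literals this equals `(M ^ t *ᵥ 1)(σ start)`.
-/

namespace Matrix

variable {ι R : Type*} [Fintype ι] [DecidableEq ι] [CommSemiring R]

theorem pow_mulVec_one_apply_eq_sum_paths (A : Matrix ι ι R) (t : ℕ) (i : ι) :
    (A ^ t *ᵥ 1) i = ∑ L : Fin (t + 1) → ι with L 0 = i,
      ∏ s : Fin t, A (L s.castSucc) (L s.succ) := by
  induction t generalizing i with
  | zero =>
    rw [pow_zero, one_mulVec, Finset.sum_filter,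
      ← (Equiv.funUnique (Fin 1) ι).symm.sum_comp]
    simp
  | succ t ih =>
    rw [Finset.sum_filter, ← (Fin.consEquiv fun _ => ι).sum_comp, Fintype.sum_prod_type,
      Finset.sum_eq_single_of_mem i (Finset.mem_univ _) fun j _ hj => by simp [hj],
      pow_succ', ← mulVec_mulVec, mulVec, dotProduct]
    simp_rw [ih, Finset.mul_sum, Finset.sum_filter]
    rw [Finset.sum_comm]
    refine Finset.sum_congr rfl fun L _ => ?_
    rw [Finset.sum_eq_single_of_mem (L 0) (Finset.mem_univ _) fun j _ hj => by simp [Ne.symm hj]]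
    simp [Fin.prod_univ_succ]

end Matrix

open Matrix

def signIdx (b : Bool) : Fin 2 := if b then 0 else 1

noncomputable def litMatrix (n : ℕ) (M : Matrix (Fin 2) (Fin 2) ℝ) :
    Matrix (Fin n × Bool) (Fin n × Bool) ℝ :=
  of fun u v => M (signIdx u.2) (signIdx v.2) / n

section LitMatrix

variable {n : ℕ} [NeZero n] (M : Matrix (Fin 2) (Fin 2) ℝ)

theorem litMatrix_mulVec (f : Fin 2 → ℝ) :
    litMatrix n M *ᵥ (fun u => f (signIdx u.2)) = fun u => (M *ᵥ f) (signIdx u.2) := by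
  ext u
  have hn : (n : ℝ) ≠ 0 := NeZero.ne _
  simp only [mulVec, dotProduct, litMatrix, of_apply, Fintype.sum_prod_type, Finset.sum_const,
    Finset.card_univ, Fintype.card_fin, nsmul_eq_mul, Finset.mul_sum]
  calc ∑ b, (n : ℝ) * (M (signIdx u.2) (signIdx b) / n * f (signIdx b))
      = ∑ b, M (signIdx u.2) (signIdx b) * f (signIdx b) := by
        congr! 1 with b; field_simp
    _ = ∑ k, M (signIdx u.2) k * f k := by simp [Fin.sum_univ_two, signIdx]

theorem litMatrix_pow_mulVec (f : Fin 2 → ℝ) (t : ℕ) :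
    litMatrix n M ^ t *ᵥ (fun u => f (signIdx u.2)) = fun u => (M ^ t *ᵥ f) (signIdx u.2) := by
  induction t with
  | zero => simp
  | succ t ih => rw [pow_succ', ← mulVec_mulVec, ih, litMatrix_mulVec, mulVec_mulVec, ← pow_succ']

end LitMatrix

noncomputable def growthMatrix (α p₀ p₁ p₂ : ℝ) : Matrix (Fin 2) (Fin 2) ℝ :=
  α • !![p₁, 2 * p₀; 2 * p₂, p₁]

theorem growthMatrix_nonneg {α p₀ p₁ p₂ : ℝ} (hα : 0 ≤ α) (h0 : 0 ≤ p₀) (h1 : 0 ≤ p₁)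
    (h2 : 0 ≤ p₂) (i j : Fin 2) : 0 ≤ growthMatrix α p₀ p₁ p₂ i j := by
  fin_cases i <;> fin_cases j <;> simp [growthMatrix] <;> positivity

section Clauses

variable {n : ℕ}

def edgeClause (u v : Fin n × Bool) : ClauseIdx n :=
  match u.2, v.2 with
  | true, true => (2, v.1, u.1)
  | false, false => (2, u.1, v.1)
  | true, false => if u.1 < v.1 then (1, u.1, v.1) else (1, v.1, u.1)
  | false, true => if u.1 < v.1 then (0, u.1, v.1) else (0, v.1, u.1)

def clauseVars (c : ClauseIdx n) : Sym2 (Fin n) := s(c.2.1, c.2.2)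

theorem impEdge_iff_edgeClause (ω : ClauseIdx n → Bool) {u v : Fin n × Bool} (h : u.1 ≠ v.1) :
    ImpEdge n ω u v ↔ ω (edgeClause u v) = true := by
  obtain ⟨a, _ | _⟩ := u <;> obtain ⟨b, _ | _⟩ := v <;>
    rcases h.lt_or_gt with hab | hab <;>
    simp [ImpEdge, PosClause, NegClause, MixClause, edgeClause, hab, hab.ne, hab.ne', hab.not_gt]

theorem clauseProb_edgeClause (α p₀ p₁ p₂ : ℝ) {u v : Fin n × Bool} (h : u.1 ≠ v.1) :
    clauseProb α p₀ p₁ p₂ n (edgeClause u v)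
      = ENNReal.ofReal (litMatrix n (growthMatrix α p₀ p₁ p₂) u v) := by
  obtain ⟨a, _ | _⟩ := u <;> obtain ⟨b, _ | _⟩ := v <;>
    rcases h.lt_or_gt with hab | hab <;>
    simp [clauseProb, edgeClause, litMatrix, growthMatrix, signIdx, hab, hab.ne, hab.ne',
      hab.not_gt] <;> ring_nf

theorem clauseVars_edgeClause (u v : Fin n × Bool) : clauseVars (edgeClause u v) = s(u.1, v.1) := by
  obtain ⟨a, _ | _⟩ := u <;> obtain ⟨b, _ | _⟩ := v <;>
    simp only [edgeClause, clauseVars, Sym2.eq_swap] <;> split_ifs <;> simp [Sym2.eq_swap]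

theorem Fin.injective_castSucc_succ_sym2 (t : ℕ) :
    Function.Injective fun s : Fin t => s(s.castSucc, s.succ) := by
  intro a b h
  rcases Sym2.eq_iff.1 h with ⟨h1, -⟩ | ⟨h1, h2⟩
  · exact Fin.castSucc_injective _ h1
  · have := congrArg Fin.val h1; have := congrArg Fin.val h2
    simp only [Fin.val_castSucc, Fin.val_succ] at *
    omega

theorem edgeClause_injective {t : ℕ} {L : Fin (t + 1) → Fin n × Bool}
    (hL : Function.Injective fun i => (L i).1) :
    Function.Injective fun s : Fin t => edgeClause (L s.castSucc) (L s.succ) := by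
  intro a b h
  have := congrArg clauseVars h
  simp only [clauseVars_edgeClause] at this
  exact Fin.injective_castSucc_succ_sym2 t ((Sym2.map.injective hL) (by simpa using this))

end Clauses

theorem bern_singleton_true (p : ℝ≥0∞) : bern p {true} = min p 1 := by
  rw [bern, PMF.toMeasure_apply_singleton _ _ (measurableSet_singleton _)]
  exact ENNReal.coe_toNNReal (by simp)

instance (α p₀ p₁ p₂ : ℝ) (n : ℕ) : IsProbabilityMeasure (F2Measure α p₀ p₁ p₂ n) := by
  unfold F2Measure; infer_instance

section Paths

variable {n t : ℕ}

def pathEvent (L : Fin (t + 1) → Fin n × Bool) : Set (ClauseIdx n → Bool) :=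
  {ω | ∀ s : Fin t, ImpEdge n ω (L s.castSucc) (L s.succ)}

theorem pathEvent_eq_pi {L : Fin (t + 1) → Fin n × Bool}
    (hL : Function.Injective fun i => (L i).1) :
    pathEvent L = (↑(Finset.univ.image fun s : Fin t => edgeClause (L s.castSucc) (L s.succ)) :
      Set (ClauseIdx n)).pi fun _ => {true} := by
  ext ω
  simp [pathEvent, impEdge_iff_edgeClause ω (hL.ne Fin.castSucc_lt_succ.ne)]

theorem measureReal_pathEvent_le {α p₀ p₁ p₂ : ℝ}
    (hM : ∀ i j, 0 ≤ growthMatrix α p₀ p₁ p₂ i j) {L : Fin (t + 1) → Fin n × Bool}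
    (hL : Function.Injective fun i => (L i).1) :
    (F2Measure α p₀ p₁ p₂ n).real (pathEvent L)
      ≤ ∏ s : Fin t, litMatrix n (growthMatrix α p₀ p₁ p₂) (L s.castSucc) (L s.succ) := by
  rw [measureReal_def, pathEvent_eq_pi hL, F2Measure, Measure.pi_pi_finset,
    Finset.prod_image fun a _ b _ h => edgeClause_injective hL h, ENNReal.toReal_prod]
  refine Finset.prod_le_prod (fun _ _ => ENNReal.toReal_nonneg) fun s _ => ?_
  rw [bern_singleton_true, clauseProb_edgeClause _ _ _ _ (hL.ne Fin.castSucc_lt_succ.ne)]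
  calc (min (ENNReal.ofReal _) 1).toReal ≤ (ENNReal.ofReal _).toReal :=
        ENNReal.toReal_mono ENNReal.ofReal_ne_top (min_le_left _ _)
    _ = _ := ENNReal.toReal_ofReal (div_nonneg (hM _ _) n.cast_nonneg)

theorem pathCount_eq_sum_indicator (ω : ClauseIdx n → Bool) (start : Fin n × Bool) :
    (pathCount n ω start t : ℝ) = ∑ L : Fin (t + 1) → Fin n × Bool
      with L 0 = start ∧ Function.Injective (fun i => (L i).1), (pathEvent L).indicator 1 ω := by
  classical
  simp only [Set.indicator_apply, Pi.one_apply, Finset.sum_boole, Finset.filter_filter]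
  rw [pathCount, Nat.card_eq_fintype_card, Fintype.card_subtype]
  congr 3
  ext L
  simp only [pathEvent, Set.mem_ofPred_eq, Function.Injective, ← not_imp_not (a := _ = _)]
  tauto

theorem integral_pathCount (μ : Measure (ClauseIdx n → Bool)) [IsFiniteMeasure μ]
    (start : Fin n × Bool) :
    ∫ ω, (pathCount n ω start t : ℝ) ∂μ = ∑ L : Fin (t + 1) → Fin n × Bool
      with L 0 = start ∧ Function.Injective (fun i => (L i).1), μ.real (pathEvent L) := by
  simp_rw [pathCount_eq_sum_indicator]
  rw [integral_finsetSum _ fun L _ => (integrable_const 1).indicator (.of_discrete)]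
  exact Finset.sum_congr rfl fun L _ => integral_indicator_one .of_discrete

end Paths

theorem integral_pathCount_le {n : ℕ} [NeZero n] {α p₀ p₁ p₂ : ℝ} (hα : 0 ≤ α) (h0 : 0 ≤ p₀)
    (h1 : 0 ≤ p₁) (h2 : 0 ≤ p₂) (t : ℕ) (start : Fin n × Bool) :
    ∫ ω, (pathCount n ω start t : ℝ) ∂(F2Measure α p₀ p₁ p₂ n)
      ≤ (growthMatrix α p₀ p₁ p₂ ^ t *ᵥ 1) (signIdx start.2) := by
  set A := litMatrix n (growthMatrix α p₀ p₁ p₂)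
  have hM := growthMatrix_nonneg hα h0 h1 h2
  have hA (u v) : 0 ≤ A u v := div_nonneg (hM _ _) n.cast_nonneg
  rw [integral_pathCount]
  calc _ ≤ ∑ L : Fin (t + 1) → Fin n × Bool
          with L 0 = start ∧ Function.Injective (fun i => (L i).1),
        ∏ s : Fin t, A (L s.castSucc) (L s.succ) :=
        Finset.sum_le_sum fun L hL => measureReal_pathEvent_le hM (Finset.mem_filter.1 hL).2.2
    _ ≤ ∑ L : Fin (t + 1) → Fin n × Bool with L 0 = start,
        ∏ s : Fin t, A (L s.castSucc) (L s.succ) :=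
        Finset.sum_le_sum_of_subset_of_nonneg (Finset.monotone_filter_right _ fun _ _ => And.left)
          fun _ _ _ => Finset.prod_nonneg fun _ _ => hA _ _
    _ = (A ^ t *ᵥ 1) start := (pow_mulVec_one_apply_eq_sum_paths A t start).symm
    _ = (growthMatrix α p₀ p₁ p₂ ^ t *ᵥ 1) (signIdx start.2) :=
        congrFun (litMatrix_pow_mulVec _ 1 t) start

theorem stmt8_general (n : ℕ) (α p₀ p₁ p₂ : ℝ) (hα : 0 < α)
    (h0 : 0 ≤ p₀) (h1 : 0 ≤ p₁) (h2 : 0 ≤ p₂)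
    (t : ℕ) (v : Fin n) :
    (∫ ω, (pathCount n ω (v, true) t : ℝ) ∂(F2Measure α p₀ p₁ p₂ n))
        ≤ (((α • !![p₁, 2 * p₀; 2 * p₂, p₁]) ^ t) *ᵥ fun _ => (1 : ℝ)) 0 ∧
    (∫ ω, (pathCount n ω (v, false) t : ℝ) ∂(F2Measure α p₀ p₁ p₂ n))
        ≤ (((α • !![p₁, 2 * p₀; 2 * p₂, p₁]) ^ t) *ᵥ fun _ => (1 : ℝ)) 1 := by
  have : NeZero n := ⟨v.pos.ne'⟩
  exact ⟨integral_pathCount_le hα.le h0 h1 h2 t (v, true),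
    integral_pathCount_le hα.le h0 h1 h2 t (v, false)⟩

/-- In the independent random 2-SAT model, the expected numbers
`Z_t⁺, Z_t⁻` of directed paths of length `t` in the implication digraph starting from a
fixed positive (resp. negative) literal and visiting pairwise distinct variables satisfy,
for every `t ≥ 0`, the entrywise bound `(Z_t⁺, Z_t⁻) ≤ M(α)^t (1,1)ᵀ`, where
`M(α) = α • !![p₁, 2p₀; 2p₂, p₁]`. -/
theorem stmt8 (n : ℕ) (hn : 2 ≤ n) (α p₀ p₁ p₂ : ℝ) (hα : 0 < α)
    (h0 : 0 ≤ p₀) (h1 : 0 ≤ p₁) (h2 : 0 ≤ p₂)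
    (hmax : 2 * α * max p₀ (max p₁ p₂) ≤ n) (t : ℕ) (v : Fin n) :
    (∫ ω, (pathCount n ω (v, true) t : ℝ) ∂(F2Measure α p₀ p₁ p₂ n))
        ≤ (((α • !![p₁, 2 * p₀; 2 * p₂, p₁]) ^ t) *ᵥ fun _ => (1 : ℝ)) 0 ∧
    (∫ ω, (pathCount n ω (v, false) t : ℝ) ∂(F2Measure α p₀ p₁ p₂ n))
        ≤ (((α • !![p₁, 2 * p₀; 2 * p₂, p₁]) ^ t) *ᵥ fun _ => (1 : ℝ)) 1 :=
  stmt8_general n α p₀ p₁ p₂ hα h0 h1 h2 t v
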